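/- Let S and A be finite nonempty sets, let p (true dynamics) and p̂ (learned model) be dynamics kernels, let π_D and π be policies with max_s TV(π_D(·|s), π(·|s)) ≤ ε_π, let ρ0 be a shared initial state distribution, r a reward bounded by r_max ≥ 0, γ ∈ (0,1), and k ∈ ℕ. Let η[π] be the return of π under p, and let η^{π_D,π} be the return of the branched process that runs π under the TRUE dynamics p for the first k timesteps and π_D under p thereafter. Then |η[π] − η^{π_D,π}| ≤ 2·r_max·[ γ^{k+1}·ε_π/(1−γ)² + γ^k·ε_π/(1−γ) ]. -/

import Mathlib

/-!
The two processes have the same marginals up to time `k - 1`. From then on, each step adds at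
most `2 ε_π` to the `ℓ¹` distance between the state-action marginals: the dynamics, a Markov
kernel, does not increase `ℓ¹` distance, and the two policies are `2 ε_π`-close in `ℓ¹` at every
state. So `‖d_t - d'_t‖₁ ≤ 2 ε_π (t + 1 - k)₊`, and the returns differ by at most
`r_max Σ_t γ^t 2 ε_π (t + 1 - k)₊ = 2 r_max ε_π γ^k / (1 - γ)²`, which is the stated bound.
-/

open scoped BigOperators

/-- Total variation distance between two probability mass functions on a finite type. -/
noncomputable def tv {X : Type*} [Fintype X] (q1 q2 : PMF X) : ℝ :=
  (1 / 2) * ∑ x, |(q1 x).toReal - (q2 x).toReal|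

/-- Total variation distance between two real-valued distributions on a finite type. -/
noncomputable def tvFun {X : Type*} [Fintype X] (d1 d2 : X → ℝ) : ℝ :=
  (1 / 2) * ∑ x, |d1 x - d2 x|

/-- Time-`t` state-action marginal of a (possibly time-varying) policy/dynamics pair,
started from initial state distribution `ρ0`:  `d⁰(s,a) = ρ0(s)·π₀(a|s)` and
`d^{t+1}(s,a) = Σ_{s',a'} d^t(s',a')·p_t(s|s',a')·π_{t+1}(a|s)`. -/
noncomputable def marginal {S A : Type*} [Fintype S] [Fintype A]
    (ρ0 : PMF S) (πseq : ℕ → S → PMF A) (pseq : ℕ → S × A → PMF S) :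
    ℕ → S × A → ℝ
  | 0 => fun sa => (ρ0 sa.1).toReal * ((πseq 0 sa.1) sa.2).toReal
  | t + 1 => fun sa =>
      ∑ s' : S, ∑ a' : A,
        marginal ρ0 πseq pseq t (s', a') * ((pseq t (s', a')) sa.1).toReal *
          ((πseq (t + 1) sa.1) sa.2).toReal

/-- Discounted return `η = Σ_t γ^t Σ_{s,a} d^t(s,a)·r(s,a)`. -/
noncomputable def ret {S A : Type*} [Fintype S] [Fintype A]
    (γ : ℝ) (r : S × A → ℝ) (d : ℕ → S × A → ℝ) : ℝ :=
  ∑' t : ℕ, γ ^ t * ∑ sa : S × A, d t sa * r sa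

theorem PMF.sum_toReal_eq_one {X : Type*} [Fintype X] (q : PMF X) : ∑ x, (q x).toReal = 1 := by
  rw [← ENNReal.toReal_sum fun x _ => q.apply_ne_top x, ← tsum_fintype (L := .unconditional _),
    q.tsum_coe, ENNReal.toReal_one]

theorem abs_sum_mul_le {ι : Type*} [Fintype ι] (d r : ι → ℝ) {R : ℝ} (hr : ∀ i, |r i| ≤ R) :
    |∑ i, d i * r i| ≤ R * ∑ i, |d i| := by
  rw [Finset.mul_sum]
  refine (Finset.abs_sum_le_sum_abs _ _).trans (Finset.sum_le_sum fun i _ => ?_)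
  rw [abs_mul, mul_comm]
  exact mul_le_mul_of_nonneg_right (hr i) (abs_nonneg _)

theorem sum_range_ite_lt (k t : ℕ) (c : ℝ) :
    ∑ i ∈ Finset.range t, (if i < k then 0 else c) = ((t - k : ℕ) : ℝ) * c := by
  induction t with
  | zero => simp
  | succ t ih =>
    rw [Finset.sum_range_succ, ih]
    split_ifs with h
    · rw [Nat.sub_eq_zero_of_le h.le, Nat.sub_eq_zero_of_le h]; simp
    · rw [Nat.succ_sub (not_lt.mp h)]; push_cast; ring

theorem hasSum_pow_mul_succ_sub {γ : ℝ} (hγ : |γ| < 1) (k : ℕ) :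
    HasSum (fun t : ℕ => γ ^ t * ((t + 1 - k : ℕ) : ℝ)) (γ ^ k / (1 - γ) ^ 2) := by
  have hshift : HasSum (fun n : ℕ => γ ^ (n + k) * ((n + k + 1 - k : ℕ) : ℝ))
      (γ ^ k / (1 - γ) ^ 2) := by
    rw [show γ ^ k / (1 - γ) ^ 2 = γ ^ k * (1 / (1 - γ) ^ (1 + 1)) by ring]
    refine ((hasSum_choose_mul_geometric_of_norm_lt_one 1 hγ).mul_left (γ ^ k)).congr_fun
      fun n => ?_
    rw [show n + k + 1 - k = n + 1 by omega, Nat.choose_one_right, pow_add]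
    ring
  have hhead : ∑ i ∈ Finset.range k, γ ^ i * ((i + 1 - k : ℕ) : ℝ) = 0 :=
    Finset.sum_eq_zero fun i hi => by
      rw [Nat.sub_eq_zero_of_le (Finset.mem_range.mp hi), Nat.cast_zero, mul_zero]
  exact (hasSum_nat_add_iff' k).mp (by rwa [hhead, sub_zero])

section Propagate

variable {X Y : Type*} [Fintype X]

noncomputable def propagate (p : X → PMF Y) (d : X → ℝ) (y : Y) : ℝ :=
  ∑ x, d x * (p x y).toReal

theorem propagate_nonneg (p : X → PMF Y) {d : X → ℝ} (hd : ∀ x, 0 ≤ d x) (y : Y) :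
    0 ≤ propagate p d y :=
  Finset.sum_nonneg fun x _ => mul_nonneg (hd x) ENNReal.toReal_nonneg

theorem sum_propagate [Fintype Y] (p : X → PMF Y) (d : X → ℝ) :
    ∑ y, propagate p d y = ∑ x, d x := by
  unfold propagate
  rw [Finset.sum_comm]
  simp only [← Finset.mul_sum, PMF.sum_toReal_eq_one, mul_one]

theorem propagate_sub (p : X → PMF Y) (d₁ d₂ : X → ℝ) (y : Y) :
    propagate p d₁ y - propagate p d₂ y = propagate p (d₁ - d₂) y := by
  simp only [propagate, ← Finset.sum_sub_distrib, Pi.sub_apply, sub_mul]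

theorem sum_abs_propagate_le [Fintype Y] (p : X → PMF Y) (d : X → ℝ) :
    ∑ y, |propagate p d y| ≤ ∑ x, |d x| :=
  calc ∑ y, |propagate p d y| ≤ ∑ y, propagate p (fun x => |d x|) y :=
        Finset.sum_le_sum fun y _ => (Finset.abs_sum_le_sum_abs _ _).trans_eq <|
          Finset.sum_congr rfl fun x _ => by rw [abs_mul, abs_of_nonneg ENNReal.toReal_nonneg]
    _ = ∑ x, |d x| := sum_propagate p _

end Propagate

section Policy

variable {S A : Type*} [Fintype S] [Fintype A]

theorem sum_mul_policy (π : S → PMF A) (m : S → ℝ) :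
    ∑ sa : S × A, m sa.1 * (π sa.1 sa.2).toReal = ∑ s, m s := by
  simp only [Fintype.sum_prod_type, ← Finset.mul_sum, PMF.sum_toReal_eq_one, mul_one]

theorem sum_abs_mul_policy_sub_le (π₁ π₂ : S → PMF A) (m₁ m₂ : S → ℝ) (hm₁ : ∀ s, 0 ≤ m₁ s)
    {δ : ℝ} (hπ : ∀ s, ∑ a, |(π₁ s a).toReal - (π₂ s a).toReal| ≤ δ) :
    ∑ sa : S × A, |m₁ sa.1 * (π₁ sa.1 sa.2).toReal - m₂ sa.1 * (π₂ sa.1 sa.2).toReal| ≤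
      δ * ∑ s, m₁ s + ∑ s, |m₁ s - m₂ s| := by
  rw [Fintype.sum_prod_type, Finset.mul_sum, ← Finset.sum_add_distrib]
  refine Finset.sum_le_sum fun s _ => ?_
  calc ∑ a, |m₁ s * (π₁ s a).toReal - m₂ s * (π₂ s a).toReal|
      ≤ ∑ a, (m₁ s * |(π₁ s a).toReal - (π₂ s a).toReal| + |m₁ s - m₂ s| * (π₂ s a).toReal) :=
        Finset.sum_le_sum fun a _ => by
          rw [show m₁ s * (π₁ s a).toReal - m₂ s * (π₂ s a).toReal =
            m₁ s * ((π₁ s a).toReal - (π₂ s a).toReal) + (m₁ s - m₂ s) * (π₂ s a).toReal by ring]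
          refine (abs_add_le _ _).trans_eq ?_
          rw [abs_mul, abs_mul, abs_of_nonneg (hm₁ s), abs_of_nonneg ENNReal.toReal_nonneg]
    _ ≤ δ * m₁ s + |m₁ s - m₂ s| := by
        rw [Finset.sum_add_distrib, ← Finset.mul_sum, ← Finset.mul_sum, PMF.sum_toReal_eq_one,
          mul_one, mul_comm δ]
        gcongr
        · exact hm₁ s
        · exact hπ s

end Policy

section Marginal

variable {S A : Type*} [Fintype S] [Fintype A]
  (ρ0 : PMF S) (πseq : ℕ → S → PMF A) (pseq : ℕ → S × A → PMF S)

theorem marginal_succ (t : ℕ) (sa : S × A) :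
    marginal ρ0 πseq pseq (t + 1) sa =
      propagate (pseq t) (marginal ρ0 πseq pseq t) sa.1 * (πseq (t + 1) sa.1 sa.2).toReal := by
  simp only [marginal, propagate, Fintype.sum_prod_type, Finset.sum_mul]

theorem marginal_nonneg (t : ℕ) (sa : S × A) : 0 ≤ marginal ρ0 πseq pseq t sa := by
  induction t generalizing sa with
  | zero => exact mul_nonneg ENNReal.toReal_nonneg ENNReal.toReal_nonneg
  | succ t ih =>
    rw [marginal_succ]
    exact mul_nonneg (propagate_nonneg _ ih _) ENNReal.toReal_nonneg

theorem sum_marginal (t : ℕ) : ∑ sa : S × A, marginal ρ0 πseq pseq t sa = 1 := by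
  induction t with
  | zero => exact (sum_mul_policy (πseq 0) _).trans ρ0.sum_toReal_eq_one
  | succ t ih =>
    simp only [marginal_succ]
    rw [sum_mul_policy, sum_propagate, ih]

theorem sum_abs_marginal (t : ℕ) : ∑ sa : S × A, |marginal ρ0 πseq pseq t sa| = 1 := by
  simp only [abs_of_nonneg (marginal_nonneg ρ0 πseq pseq t _), sum_marginal]

/-- The dynamics never increase the `ℓ¹` distance, so only the policy mismatches accumulate. -/
theorem sum_abs_marginal_sub_le (πseq' : ℕ → S → PMF A) {δ : ℕ → ℝ}
    (hπ : ∀ i s, ∑ a, |(πseq i s a).toReal - (πseq' i s a).toReal| ≤ δ i) (t : ℕ) :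
    ∑ sa : S × A, |marginal ρ0 πseq pseq t sa - marginal ρ0 πseq' pseq t sa| ≤
      ∑ i ∈ Finset.range (t + 1), δ i := by
  induction t with
  | zero =>
    simpa [marginal, PMF.sum_toReal_eq_one] using
      sum_abs_mul_policy_sub_le (πseq 0) (πseq' 0) (fun s => (ρ0 s).toReal)
        (fun s => (ρ0 s).toReal) (fun s => ENNReal.toReal_nonneg) (hπ 0)
  | succ t ih =>
    simp only [marginal_succ]
    refine (sum_abs_mul_policy_sub_le _ _ _ _
      (propagate_nonneg _ (marginal_nonneg ρ0 πseq pseq t)) (hπ (t + 1))).trans ?_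
    rw [sum_propagate, sum_marginal, mul_one, Finset.sum_range_succ, add_comm]
    gcongr
    simp only [propagate_sub]
    exact (sum_abs_propagate_le _ _).trans ih

end Marginal

section Return

variable {S A : Type*} [Fintype S] [Fintype A] {γ rmax : ℝ} {r : S × A → ℝ}

theorem summable_discounted_reward (hγ0 : 0 ≤ γ) (hγ1 : γ < 1) (hr : ∀ sa, |r sa| ≤ rmax)
    {d : ℕ → S × A → ℝ} (hd : ∀ t, ∑ sa, |d t sa| = 1) :
    Summable fun t => γ ^ t * ∑ sa, d t sa * r sa := by
  refine Summable.of_norm_bounded ((summable_geometric_of_lt_one hγ0 hγ1).mul_left rmax)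
    fun t => ?_
  rw [Real.norm_eq_abs, abs_mul, abs_of_nonneg (pow_nonneg hγ0 t), mul_comm rmax]
  exact mul_le_mul_of_nonneg_left ((abs_sum_mul_le _ _ hr).trans_eq (by rw [hd, mul_one]))
    (pow_nonneg hγ0 t)

theorem abs_ret_sub_le (hγ0 : 0 ≤ γ) (hγ1 : γ < 1) (hrmax : 0 ≤ rmax)
    (hr : ∀ sa, |r sa| ≤ rmax) {d₁ d₂ : ℕ → S × A → ℝ} (hd₁ : ∀ t, ∑ sa, |d₁ t sa| = 1)
    (hd₂ : ∀ t, ∑ sa, |d₂ t sa| = 1) {e : ℕ → ℝ} (he : ∀ t, ∑ sa, |d₁ t sa - d₂ t sa| ≤ e t)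
    {E : ℝ} (hE : HasSum (fun t => γ ^ t * e t) E) :
    |ret γ r d₁ - ret γ r d₂| ≤ rmax * E := by
  rw [ret, ret, ← (summable_discounted_reward hγ0 hγ1 hr hd₁).tsum_sub
    (summable_discounted_reward hγ0 hγ1 hr hd₂), ← Real.norm_eq_abs]
  refine tsum_of_norm_bounded (hE.mul_left rmax) fun t => ?_
  rw [Real.norm_eq_abs, ← mul_sub, ← Finset.sum_sub_distrib, abs_mul,
    abs_of_nonneg (pow_nonneg hγ0 t), mul_left_comm]
  simp only [← sub_mul]
  gcongr
  exact (abs_sum_mul_le _ _ hr).trans (mul_le_mul_of_nonneg_left (he t) hrmax)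

end Return

theorem branched_policy_shift_bound_general
    {S A : Type*} [Fintype S] [Fintype A]
    (p : S × A → PMF S) (πD π : S → PMF A) (ρ0 : PMF S)
    (r : S × A → ℝ) (rmax : ℝ) (hrmax : 0 ≤ rmax) (hr : ∀ sa : S × A, |r sa| ≤ rmax)
    (γ : ℝ) (hγ0 : 0 < γ) (hγ1 : γ < 1) (k : ℕ) (επ : ℝ)
    (hεπ : ∀ s : S, tv (πD s) (π s) ≤ επ) :
    |ret γ r (marginal ρ0 (fun _ => π) (fun _ => p)) -
        ret γ r (marginal ρ0 (fun t => if t < k then π else πD) (fun _ => p))| ≤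
      2 * rmax * (γ ^ (k + 1) * επ / (1 - γ) ^ 2 + γ ^ k * επ / (1 - γ)) := by
  set πbranch : ℕ → S → PMF A := fun t => if t < k then π else πD
  have hmismatch : ∀ i s, ∑ a, |(πbranch i s a).toReal - (π s a).toReal| ≤
      if i < k then 0 else 2 * επ := by
    intro i s
    by_cases hi : i < k
    · simp [πbranch, hi]
    · have := hεπ s
      simp only [tv] at this
      simp only [πbranch, hi, if_false]
      linarith
  have hl1 : ∀ t, ∑ sa, |marginal ρ0 πbranch (fun _ => p) t sa -
      marginal ρ0 (fun _ => π) (fun _ => p) t sa| ≤ 2 * επ * ((t + 1 - k : ℕ) : ℝ) := fun t =>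
    (sum_abs_marginal_sub_le ρ0 πbranch _ _ hmismatch t).trans_eq
      (by rw [sum_range_ite_lt]; ring)
  have hgeom := (hasSum_pow_mul_succ_sub (abs_lt.mpr ⟨by linarith, hγ1⟩) k).mul_left (2 * επ)
  rw [abs_sub_comm]
  calc _ ≤ rmax * (2 * επ * (γ ^ k / (1 - γ) ^ 2)) :=
        abs_ret_sub_le hγ0.le hγ1 hrmax hr (sum_abs_marginal ρ0 _ _)
          (sum_abs_marginal ρ0 _ _) hl1 (hgeom.congr_fun fun t => by ring)
    _ = _ := by
        have : 1 - γ ≠ 0 := by linarith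
        field_simp
        ring

/-- Bound on the gap between the true returns of `π` and the returns of the branched
process running `π` under the true dynamics for `k` steps and `πD` afterwards
(term `L₁` in the proof of Theorem A.2). -/
theorem branched_policy_shift_bound
    {S A : Type*} [Fintype S] [Fintype A] [Nonempty S] [Nonempty A]
    (p phat : S × A → PMF S) (πD π : S → PMF A) (ρ0 : PMF S)
    (r : S × A → ℝ) (rmax : ℝ) (hrmax : 0 ≤ rmax) (hr : ∀ sa : S × A, |r sa| ≤ rmax)
    (γ : ℝ) (hγ0 : 0 < γ) (hγ1 : γ < 1) (k : ℕ) (επ : ℝ)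
    (hεπ : ∀ s : S, tv (πD s) (π s) ≤ επ) :
    |ret γ r (marginal ρ0 (fun _ => π) (fun _ => p)) -
        ret γ r (marginal ρ0 (fun t => if t < k then π else πD) (fun _ => p))| ≤
      2 * rmax * (γ ^ (k + 1) * επ / (1 - γ) ^ 2 + γ ^ k * επ / (1 - γ)) :=
  branched_policy_shift_bound_general p πD π ρ0 r rmax hrmax hr γ hγ0 hγ1 k επ hεπ
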